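/- The exponential generating function of the sequence (C_r(n))_{n≥0}, where C_r(n) = D_r^{(1)}(n) − D_r^{(0)}(n), is G_r(x) = ∑_{n≥0} C_r(n) x^n / n! = (−1)^{r−1} x^r e^{−x} / (1+x)^{r−1} (as formal power series), for every natural number r. -/

import Mathlib

open scoped Classical

/-- Parity of a permutation: `0` if even, `1` if odd. -/
noncomputable def parity {α : Type*} [Fintype α] [DecidableEq α] (σ : Equiv.Perm α) : ℕ :=
  if Equiv.Perm.sign σ = 1 then 0 else 1

/-- The set `𝒟(r,u,m,n)`: permutations `σ` of `{0,…,r+n-1}` (modelling `{1,…,r+n}`,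
with the first `r` elements playing the role of `{1,…,r}`) such that `σ x = y` for exactly
`u` pairs `(x,y)` with `x, y` among the first `r` elements, and exactly `m` elements among
the last `n` elements are fixed points. -/
noncomputable def Dgen (r u m n : ℕ) : Finset (Equiv.Perm (Fin (r + n))) :=
  Finset.univ.filter (fun σ =>
    ((Finset.univ : Finset (Fin (r + n))).filter
      (fun x : Fin (r + n) => (x : ℕ) < r ∧ ((σ x : ℕ) < r))).card = u ∧
    ((Finset.univ : Finset (Fin (r + n))).filter
      (fun t : Fin (r + n) => r ≤ (t : ℕ) ∧ σ t = t)).card = m)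

/-- The set `𝒟_{r,u,m}(n)`: permutations `σ` of `{0,…,r+n-1}` in which any two distinct
elements among the first `r` lie in disjoint cycles, exactly `u` of the first `r` elements
are fixed points, and exactly `m` of the last `n` elements are fixed points. -/
noncomputable def Drum (r u m n : ℕ) : Finset (Equiv.Perm (Fin (r + n))) :=
  Finset.univ.filter (fun σ =>
    (∀ x y : Fin (r + n), (x : ℕ) < r → (y : ℕ) < r → x ≠ y → ¬ σ.SameCycle x y) ∧
    ((Finset.univ : Finset (Fin (r + n))).filter
      (fun z : Fin (r + n) => (z : ℕ) < r ∧ σ z = z)).card = u ∧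
    ((Finset.univ : Finset (Fin (r + n))).filter
      (fun t : Fin (r + n) => r ≤ (t : ℕ) ∧ σ t = t)).card = m)

/-- The number of disjoint cycles of `σ` containing at least one of the first `r` elements:
we count the distinct sets `{y : y is in the same cycle of σ as x}` for `x` among the
first `r` elements. -/
noncomputable def touchingCycles (r n : ℕ) (σ : Equiv.Perm (Fin (r + n))) : ℕ :=
  (((Finset.univ : Finset (Fin (r + n))).filter (fun x : Fin (r + n) => (x : ℕ) < r)).image
    (fun x => (Finset.univ : Finset (Fin (r + n))).filter (fun y => σ.SameCycle x y))).card

/-- The set of `r`-derangements of length `r+n`: fixed-point-free permutations in which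
any two distinct elements among the first `r` lie in disjoint cycles. -/
noncomputable def rDerSet (r n : ℕ) : Finset (Equiv.Perm (Fin (r + n))) :=
  Finset.univ.filter (fun σ =>
    (∀ x, σ x ≠ x) ∧
    (∀ x y : Fin (r + n), (x : ℕ) < r → (y : ℕ) < r → x ≠ y → ¬ σ.SameCycle x y))

/-- `D_r(n)`, the number of `r`-derangements. -/
noncomputable def Dr (r n : ℕ) : ℕ := (rDerSet r n).card

/-- `D_r^{(i)}(n)`, the number of `r`-derangements of parity `i`. -/
noncomputable def Dri (r i n : ℕ) : ℕ :=
  ((rDerSet r n).filter (fun σ => parity σ = i)).card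

open Equiv Equiv.Perm
open PowerSeries


lemma pow_ne_of_fix {α : Type*} (τ : Perm α) {e x : α} (he : τ e = e) (hx : x ≠ e) (n : ℕ) :
    (τ ^ n) x ≠ e := by
  intro h
  apply hx
  have : ∀ k : ℕ, (τ ^ k) x = e → x = e := by
    intro k hk
    have h2 : (τ ^ k) e = e := pow_apply_eq_self_of_apply_eq_self he k
    exact (τ ^ k).injective (hk.trans h2.symm)
  exact this n h

lemma sameCycle_skip {α : Type*} [DecidableEq α] [Fintype α] (σ : Perm α) (e : α) (he : σ e ≠ e) {x y : α}
    (hx : x ≠ e) (hy : y ≠ e) :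
    (σ * Equiv.swap e (σ⁻¹ e)).SameCycle x y ↔ σ.SameCycle x y := by
  set u := σ⁻¹ e with hu
  set τ := σ * Equiv.swap e u with hτ
  have hue : u ≠ e := by
    intro h
    apply he
    have : σ u = e := by simp [hu]
    rwa [h] at this
  have hτe : τ e = e := by
    simp [hτ, Equiv.swap_apply_left, hu]
  have hτu : τ u = σ e := by
    simp [hτ, Equiv.swap_apply_right]
  have hτx : ∀ z, z ≠ e → z ≠ u → τ z = σ z := by
    intro z h1 h2
    simp [hτ, Equiv.swap_apply_of_ne_of_ne h1 h2]
  have hσu : σ u = e := by simp [hu]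
  constructor
  · -- τ.SameCycle → σ.SameCycle
    intro h
    obtain ⟨n, -, hn⟩ := h.exists_pow_eq'
    have key : ∀ n : ℕ, ∃ m : ℕ, (σ ^ m) x = (τ ^ n) x := by
      intro n
      induction n with
      | zero => exact ⟨0, rfl⟩
      | succ n ih =>
        obtain ⟨m, hm⟩ := ih
        have hzne : (τ ^ n) x ≠ e := pow_ne_of_fix τ hτe hx n
        by_cases hzu : (τ ^ n) x = u
        · refine ⟨m + 2, ?_⟩
          have h1 : (σ ^ (m+1)) x = e := by
            rw [pow_succ', Perm.mul_apply, hm, hzu, hσu]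
          rw [pow_succ', Perm.mul_apply, h1, pow_succ', Perm.mul_apply, hzu, hτu]
        · refine ⟨m + 1, ?_⟩
          rw [pow_succ', Perm.mul_apply, hm, pow_succ', Perm.mul_apply,
            hτx _ hzne hzu]
    obtain ⟨m, hm⟩ := key n
    exact ⟨(m : ℤ), by rw [zpow_natCast, hm, hn]⟩
  · -- σ.SameCycle → τ.SameCycle
    intro h
    obtain ⟨n, -, hn⟩ := h.exists_pow_eq'
    have key : ∀ n : ℕ,
        (∃ m : ℕ, (τ ^ m) x = (σ ^ n) x) ∨
          ((σ ^ n) x = e ∧ ∃ m : ℕ, (τ ^ m) x = (σ ^ (n+1)) x) := by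
      intro n
      induction n with
      | zero => exact Or.inl ⟨0, rfl⟩
      | succ n ih =>
        rcases ih with ⟨m, hm⟩ | ⟨hz, m, hm⟩
        · have hzne : (σ ^ n) x ≠ e := by
            rw [← hm]; exact pow_ne_of_fix τ hτe hx m
          by_cases hzu : (σ ^ n) x = u
          · refine Or.inr ⟨by rw [pow_succ', Perm.mul_apply, hzu, hσu], m + 1, ?_⟩
            have h1 : (σ ^ (n+1)) x = e := by
              rw [pow_succ', Perm.mul_apply, hzu, hσu]
            rw [pow_succ', Perm.mul_apply, hm, hzu, hτu, pow_succ', Perm.mul_apply,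
              h1]
          · refine Or.inl ⟨m + 1, ?_⟩
            rw [pow_succ', Perm.mul_apply, hm, hτx _ hzne hzu,
              pow_succ', Perm.mul_apply]
        · exact Or.inl ⟨m, hm⟩
    rcases key n with ⟨m, hm⟩ | ⟨hz, -⟩
    · exact ⟨(m : ℤ), by rw [zpow_natCast, hm, hn]⟩
    · exact absurd (hn.symm.trans hz) hy


noncomputable def Ssum (r n : ℕ) : ℤ := ∑ σ ∈ rDerSet r n, (Equiv.Perm.sign σ : ℤ)

lemma sameCycle_fix {α : Type*} {τ : Perm α} {x y : α} (h : τ x = x)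
    (hs : τ.SameCycle x y) : y = x := by
  obtain ⟨i, hi⟩ := hs
  rw [zpow_apply_eq_self_of_apply_eq_self h] at hi
  exact hi.symm

lemma mem_iff_lt_card_of_downclosed {M : ℕ} (s : Finset (Fin M))
    (h : ∀ i j : Fin M, j ≤ i → i ∈ s → j ∈ s) (i : Fin M) : i ∈ s ↔ (i : ℕ) < s.card := by
  constructor
  · intro hi
    have hsub : Finset.Iic i ⊆ s := fun j hj => h i j (Finset.mem_Iic.mp hj) hi
    have h2 := Finset.card_le_card hsub
    rw [Fin.card_Iic] at h2
    omega
  · intro hi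
    by_contra hns
    have hsub : s ⊆ Finset.Iio i := by
      intro j hj
      rw [Finset.mem_Iio]
      by_contra hij
      exact hns (h j i (le_of_not_gt hij) hj)
    have h2 := Finset.card_le_card hsub
    rw [Fin.card_Iio] at h2
    omega

lemma transfer {N : ℕ} (r r' m' : ℕ) (F : Finset (Fin N))
    (hr' : (Fᶜ.filter (fun x : Fin N => (x : ℕ) < r)).card = r')
    (hm' : (Fᶜ.filter (fun x : Fin N => r ≤ (x : ℕ))).card = m') :
    (∑ τ ∈ Finset.univ.filter (fun τ : Perm (Fin N) =>
        (∀ x ∈ F, τ x = x) ∧ (∀ x ∉ F, τ x ≠ x) ∧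
        (∀ x y : Fin N, (x : ℕ) < r → (y : ℕ) < r → x ≠ y → ¬ τ.SameCycle x y)),
      (Equiv.Perm.sign τ : ℤ)) = Ssum r' m' := by
  classical
  have hA : Fᶜ.card = r' + m' := by
    rw [← hr', ← hm']
    have h1 : Fᶜ.filter (fun x : Fin N => r ≤ (x : ℕ)) = Fᶜ.filter (fun x : Fin N => ¬ ((x : ℕ) < r)) := by
      apply Finset.filter_congr; intro x _; simp [not_lt]
    rw [h1, Finset.card_filter_add_card_filter_not]
  have hA' : Fᶜ.card = r' + m' := hA
  set f : Fin (r' + m') ≃ {x : Fin N // x ∈ Fᶜ} := (Fᶜ.orderIsoOfFin hA).toEquiv with hf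
  -- monotonicity
  have hmono : ∀ i j : Fin (r' + m'), j ≤ i → ((f j : Fin N) : ℕ) ≤ ((f i : Fin N) : ℕ) := by
    intro i j hji
    exact_mod_cast Fin.le_iff_val_le_val.mp ((Fᶜ.orderIsoOfFin hA).monotone hji)
  -- specials correspond to initial segment
  have spec_iff : ∀ i : Fin (r' + m'), ((f i : Fin N) : ℕ) < r ↔ (i : ℕ) < r' := by
    set s : Finset (Fin (r' + m')) :=
      Finset.univ.filter (fun i => ((f i : Fin N) : ℕ) < r) with hs
    have hdc : ∀ i j : Fin (r' + m'), j ≤ i → i ∈ s → j ∈ s := by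
      intro i j hji hi
      simp only [hs, Finset.mem_filter, Finset.mem_univ, true_and] at hi ⊢
      exact lt_of_le_of_lt (hmono i j hji) hi
    have hcard : s.card = r' := by
      have hcb : s.card = (Fᶜ.filter (fun x : Fin N => (x : ℕ) < r)).card := by
        apply Finset.card_bij (fun i _ => (f i : Fin N))
        · intro i hi
          simp only [hs, Finset.mem_filter, Finset.mem_univ, true_and] at hi
          exact Finset.mem_filter.mpr ⟨(f i).2, hi⟩
        · intro i _ j _ hij
          exact f.injective (Subtype.ext hij)
        · intro x hx
          obtain ⟨hx1, hx2⟩ := Finset.mem_filter.mp hx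
          refine ⟨f.symm ⟨x, hx1⟩, ?_, by simp⟩
          simp only [hs, Finset.mem_filter, Finset.mem_univ, true_and]
          simpa using hx2
      exact hcb.trans hr'
    intro i
    have := mem_iff_lt_card_of_downclosed s hdc i
    rw [hcard] at this
    simpa only [hs, Finset.mem_filter, Finset.mem_univ, true_and] using this.symm.symm
  -- the fixing-iff property
  have hperm : ∀ τ : Perm (Fin N), (∀ x ∈ F, τ x = x) →
      ∀ x : Fin N, x ∈ Fᶜ ↔ τ x ∈ Fᶜ := by
    intro τ h1 x
    constructor
    · intro hx
      by_contra hc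
      have hxF : τ x ∈ F := by simpa using hc
      have h3 : τ (τ x) = τ x := h1 _ hxF
      have h4 : τ x = x := τ.injective h3
      rw [h4] at hxF
      simp [hxF] at hx
    · intro hx
      by_contra hc
      have hxF : x ∈ F := by simpa using hc
      rw [h1 x hxF] at hx
      simp [hxF] at hx
  set gg : Perm (Fin N) → Perm (Fin (r' + m')) := fun τ =>
    if h : ∀ x : Fin N, x ∈ Fᶜ ↔ τ x ∈ Fᶜ then
      f.permCongr.symm (τ.subtypePerm (fun x => (h x).symm)) else 1 with hgg
  -- right inverse on the big set
  have hright : ∀ τ : Perm (Fin N), (∀ x ∈ F, τ x = x) →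
      (gg τ).extendDomain f = τ := by
    intro τ h1
    have hp := hperm τ h1
    have hgt : gg τ = f.permCongr.symm (τ.subtypePerm (fun x => (hp x).symm)) := by
      rw [hgg]; simp only [dif_pos hp]
    apply Equiv.ext
    intro x
    by_cases hx : x ∈ Fᶜ
    · rw [Perm.extendDomain_apply_subtype _ f hx, hgt]
      simp [Equiv.permCongr_symm, Equiv.permCongr_apply, Perm.subtypePerm_apply]
    · rw [Perm.extendDomain_apply_not_subtype _ f hx]
      have hxF : x ∈ F := by simpa using hx
      exact (h1 x hxF).symm
  have hext_fix : ∀ (π : Perm (Fin (r' + m'))) (x : Fin N), x ∉ Fᶜ →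
      π.extendDomain f x = x := fun π x hx => Perm.extendDomain_apply_not_subtype _ f hx
  have hext_zpow : ∀ (π : Perm (Fin (r' + m'))) (i : ℤ) (a : Fin (r' + m')),
      (π.extendDomain f ^ i) ((f a : Fin N)) = ((f (( π ^ i) a) : Fin N)) := by
    intro π i a
    have h1 : π.extendDomain f ^ i = (π ^ i).extendDomain f :=
      (map_zpow (Perm.extendDomainHom f) π i).symm
    rw [h1]
    exact Perm.extendDomain_apply_image (π ^ i) f a
  symm
  rw [Ssum]
  apply Finset.sum_nbij' (i := fun π => π.extendDomain f) (j := gg)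
  · -- maps into big set
    intro π hπ
    obtain ⟨-, hfix, hdisj⟩ := Finset.mem_filter.mp hπ
    refine Finset.mem_filter.mpr ⟨Finset.mem_univ _, ?_, ?_, ?_⟩
    · intro x hxF
      exact hext_fix π x (by simpa using hxF)
    · intro x hxF hc
      have hx : x ∈ Fᶜ := by simpa using hxF
      rw [Perm.extendDomain_apply_subtype _ f hx] at hc
      have : π (f.symm ⟨x, hx⟩) = f.symm ⟨x, hx⟩ := by
        apply f.injective
        apply Subtype.ext
        simpa using hc
      exact hfix _ this
    · intro x y hxr hyr hxy hsc
      by_cases hxF : x ∈ Fᶜ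
      · by_cases hyF : y ∈ Fᶜ
        · obtain ⟨i, hi⟩ := hsc
          have hxe : x = ((f (f.symm ⟨x, hxF⟩) : Fin N)) := by simp
          have hye : y = ((f (f.symm ⟨y, hyF⟩) : Fin N)) := by simp
          rw [hxe] at hi
          rw [hext_zpow] at hi
          have hab : (π ^ i) (f.symm ⟨x, hxF⟩) = f.symm ⟨y, hyF⟩ := by
            apply f.injective; apply Subtype.ext; simpa using hi
          refine hdisj (f.symm ⟨x, hxF⟩) (f.symm ⟨y, hyF⟩) ?_ ?_ ?_ ⟨i, hab⟩
          · rw [← spec_iff]; simpa using hxr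
          · rw [← spec_iff]; simpa using hyr
          · intro hc
            apply hxy
            have := congrArg (fun z => ((f z : Fin N))) hc
            simpa using this
        · have := sameCycle_fix (hext_fix π y hyF) hsc.symm
          exact hxy this
      · have := sameCycle_fix (hext_fix π x hxF) hsc
        exact hxy this.symm
  · -- gg maps back
    intro τ hτ
    obtain ⟨-, h1, h2, h3⟩ := Finset.mem_filter.mp hτ
    have hre := hright τ h1
    refine Finset.mem_filter.mpr ⟨Finset.mem_univ _, ?_, ?_⟩
    · intro a ha
      have hfa : (f a : Fin N) ∈ Fᶜ := (f a).2
      apply h2 (f a : Fin N) (Finset.mem_compl.mp hfa)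
      calc τ ((f a : Fin N)) = (gg τ).extendDomain f ((f a : Fin N)) := by rw [hre]
        _ = ((f ((gg τ) a) : Fin N)) := Perm.extendDomain_apply_image _ f a
        _ = ((f a : Fin N)) := by rw [ha]
    · intro a b har hbr hab hsc
      obtain ⟨i, hi⟩ := hsc
      have hti : τ ^ i = ((gg τ) ^ i).extendDomain f := by
        conv_lhs => rw [← hre]
        exact (map_zpow (Perm.extendDomainHom f) (gg τ) i).symm
      refine h3 (f a : Fin N) (f b : Fin N) ?_ ?_ ?_ ⟨i, ?_⟩
      · rw [spec_iff]; exact har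
      · rw [spec_iff]; exact hbr
      · intro hc
        exact hab (f.injective (Subtype.ext hc))
      · rw [hti]
        calc ((gg τ) ^ i).extendDomain f ((f a : Fin N))
            = ((f (((gg τ) ^ i) a) : Fin N)) := Perm.extendDomain_apply_image _ f a
          _ = ((f b : Fin N)) := by rw [hi]
  · -- left inverse
    intro π hπ
    have h1 : ∀ x ∈ F, π.extendDomain f x = x := fun x hx =>
      hext_fix π x (by simpa using hx)
    have hp := hperm _ h1
    rw [hgg]
    simp only [dif_pos hp]
    apply Equiv.ext
    intro a
    simp only [Equiv.permCongr_symm, Equiv.permCongr_apply]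
    apply f.injective
    apply Subtype.ext
    simp only [Perm.subtypePerm_apply]
    simp [Perm.extendDomain_apply_image]
  · -- right inverse
    intro τ hτ
    obtain ⟨-, h1, -, -⟩ := Finset.mem_filter.mp hτ
    exact hright τ h1
  · -- summand
    intro π hπ
    rw [Perm.sign_extendDomain]


lemma card_filter_lt (N r : ℕ) (hr : r ≤ N) :
    ((Finset.univ : Finset (Fin N)).filter (fun x : Fin N => (x : ℕ) < r)).card = r := by
  apply Finset.card_eq_of_bijective (fun i hi => (⟨i, lt_of_lt_of_le hi hr⟩ : Fin N))
  · intro a ha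
    obtain ⟨-, ha2⟩ := Finset.mem_filter.mp ha
    exact ⟨a, ha2, by simp⟩
  · intro i hi
    simp [hi]
  · intro i j hi hj hij
    simpa [Fin.ext_iff] using hij

lemma card_filter_ge (N r : ℕ) (hr : r ≤ N) :
    ((Finset.univ : Finset (Fin N)).filter (fun x : Fin N => r ≤ (x : ℕ))).card = N - r := by
  have h1 : (Finset.univ : Finset (Fin N)).filter (fun x : Fin N => r ≤ (x : ℕ))
      = (Finset.univ : Finset (Fin N)).filter (fun x : Fin N => ¬ ((x : ℕ) < r)) := by
    apply Finset.filter_congr; intro x _; simp [not_lt]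
  have h2 := Finset.card_filter_add_card_filter_not
    (s := (Finset.univ : Finset (Fin N))) (p := fun x : Fin N => (x : ℕ) < r)
  rw [card_filter_lt N r hr] at h2
  rw [h1]
  simp only [Finset.card_univ, Fintype.card_fin] at h2
  omega
lemma Ssum_rec (r m : ℕ) :
    Ssum r (m+1) = -(((r : ℤ) + m) * Ssum r m + (m : ℤ) * Ssum r (m-1)
      + (r : ℤ) * Ssum (r-1) m) := by
  classical
  set e : Fin (r + (m+1)) := ⟨r + m, by omega⟩ with he
  have heval : (e : ℕ) = r + m := rfl
  have hne : ∀ x : Fin (r + (m+1)), (x : ℕ) < r → x ≠ e := by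
    intro x hx
    apply Fin.ne_of_val_ne
    rw [heval]; omega
  set Q : Fin (r + (m+1)) → Finset (Perm (Fin (r + (m+1)))) := fun u =>
    Finset.univ.filter (fun τ => τ e = e ∧ (∀ x, x ≠ e → x ≠ u → τ x ≠ x) ∧
      (∀ x y : Fin (r + (m+1)), (x : ℕ) < r → (y : ℕ) < r → x ≠ y → ¬ τ.SameCycle x y))
    with hQ
  set P : Finset (Fin (r + (m+1)) × Perm (Fin (r + (m+1)))) :=
    Finset.univ.filter (fun p => p.1 ≠ e ∧ p.2 ∈ Q p.1) with hP
  -- Step 1 : the insertion/removal bijection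
  have step1 : Ssum r (m+1) = ∑ p ∈ P, -(Equiv.Perm.sign p.2 : ℤ) := by
    rw [Ssum]
    apply Finset.sum_nbij'
      (i := fun σ => ((σ⁻¹ e, σ * Equiv.swap e (σ⁻¹ e)) :
        Fin (r + (m+1)) × Perm (Fin (r + (m+1)))))
      (j := fun p => p.2 * Equiv.swap e p.1)
    · intro σ hσ
      obtain ⟨-, hfix, hdisj⟩ := Finset.mem_filter.mp hσ
      have hσe : σ e ≠ e := hfix e
      have hue : σ⁻¹ e ≠ e := by
        intro h
        apply hσe
        conv_lhs => rw [← h]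
        exact σ.apply_symm_apply e
      refine Finset.mem_filter.mpr ⟨Finset.mem_univ _, hue, ?_⟩
      simp only [hQ, Finset.mem_filter, Finset.mem_univ, true_and]
      refine ⟨?_, ?_, ?_⟩
      · rw [Perm.mul_apply, Equiv.swap_apply_left, ← Perm.mul_apply, mul_inv_cancel, Perm.one_apply]
      · intro x hxe hxu
        rw [Perm.mul_apply, Equiv.swap_apply_of_ne_of_ne hxe hxu]
        exact hfix x
      · intro x y hx hy hxy
        rw [sameCycle_skip σ e hσe (hne x hx) (hne y hy)]
        exact hdisj x y hx hy hxy
    · rintro ⟨u, τ⟩ hp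
      obtain ⟨-, hu, hQu⟩ := Finset.mem_filter.mp hp
      simp only [hQ, Finset.mem_filter, Finset.mem_univ, true_and] at hQu
      obtain ⟨hτe, hτd, hτdisj⟩ := hQu
      have hσ'u : (τ * Equiv.swap e u) u = e := by
        rw [Perm.mul_apply, Equiv.swap_apply_right, hτe]
      have hτue : τ u ≠ e := by
        intro h
        exact hu (τ.injective (h.trans hτe.symm))
      have hσ'e : (τ * Equiv.swap e u) e = τ u := by
        rw [Perm.mul_apply, Equiv.swap_apply_left]
      refine Finset.mem_filter.mpr ⟨Finset.mem_univ _, ?_, ?_⟩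
      · intro x
        by_cases hxe : x = e
        · rw [hxe, hσ'e]; exact hτue
        · by_cases hxu : x = u
          · rw [hxu, hσ'u]; exact fun h => hu h.symm
          · rw [Perm.mul_apply, Equiv.swap_apply_of_ne_of_ne hxe hxu]
            exact hτd x hxe hxu
      · have hσ'e_ne : (τ * Equiv.swap e u) e ≠ e := by rw [hσ'e]; exact hτue
        have hinv : (τ * Equiv.swap e u)⁻¹ e = u := by
          rw [Perm.inv_eq_iff_eq]
          exact hσ'u.symm
        have hmul : (τ * Equiv.swap e u) * Equiv.swap e ((τ * Equiv.swap e u)⁻¹ e) = τ := by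
          rw [hinv, mul_assoc, Equiv.swap_mul_self, mul_one]
        intro x y hx hy hxy
        have hsk := sameCycle_skip (τ * Equiv.swap e u) e hσ'e_ne (hne x hx) (hne y hy)
        rw [hmul] at hsk
        rw [← hsk]
        exact hτdisj x y hx hy hxy
    · intro σ hσ
      simp only
      rw [mul_assoc, Equiv.swap_mul_self, mul_one]
    · rintro ⟨u, τ⟩ hp
      obtain ⟨-, hu, hQu⟩ := Finset.mem_filter.mp hp
      simp only [hQ, Finset.mem_filter, Finset.mem_univ, true_and] at hQu
      obtain ⟨hτe, -, -⟩ := hQu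
      have hσ'u : (τ * Equiv.swap e u) u = e := by
        rw [Perm.mul_apply, Equiv.swap_apply_right, hτe]
      have hinv : (τ * Equiv.swap e u)⁻¹ e = u := by
        rw [Perm.inv_eq_iff_eq]
        exact hσ'u.symm
      simp only
      rw [Prod.ext_iff]
      refine ⟨hinv, ?_⟩
      simp only
      rw [hinv, mul_assoc, Equiv.swap_mul_self, mul_one]
    · intro σ hσ
      obtain ⟨-, hfix, -⟩ := Finset.mem_filter.mp hσ
      have hσe : σ e ≠ e := hfix e
      have hue : σ⁻¹ e ≠ e := by
        intro h
        apply hσe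
        conv_lhs => rw [← h]
        exact σ.apply_symm_apply e
      simp only
      rw [Equiv.Perm.sign_mul, Equiv.Perm.sign_swap (Ne.symm hue)]
      simp
  -- Step 2 : Fubini
  have step2 : ∑ p ∈ P, -(Equiv.Perm.sign p.2 : ℤ)
      = ∑ u ∈ Finset.univ.filter (fun u : Fin (r + (m+1)) => u ≠ e),
          ∑ τ ∈ Q u, -(Equiv.Perm.sign τ : ℤ) := by
    exact Finset.sum_finset_product' (f := fun u (τ : Perm (Fin (r + (m+1)))) =>
      -(Equiv.Perm.sign τ : ℤ)) P _ Q
      (fun p => by simp only [hP, Finset.mem_filter, Finset.mem_univ, true_and])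
  -- the "no extra fixed point" sum
  have hbig0 : (∑ τ ∈ Finset.univ.filter (fun τ : Perm (Fin (r + (m+1))) =>
      (∀ x ∈ ({e} : Finset (Fin (r + (m+1)))), τ x = x) ∧
      (∀ x ∉ ({e} : Finset (Fin (r + (m+1)))), τ x ≠ x) ∧
      (∀ x y : Fin (r + (m+1)), (x : ℕ) < r → (y : ℕ) < r → x ≠ y → ¬ τ.SameCycle x y)),
      (Equiv.Perm.sign τ : ℤ)) = Ssum r m := by
    apply transfer
    · have hset : ({e} : Finset (Fin (r + (m+1))))ᶜ.filter (fun x : Fin (r + (m+1)) => (x:ℕ) < r)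
          = Finset.univ.filter (fun x : Fin (r + (m+1)) => (x:ℕ) < r) := by
        ext x
        simp only [Finset.mem_filter, Finset.mem_compl, Finset.mem_singleton, Finset.mem_univ,
          true_and]
        exact ⟨fun h => h.2, fun h => ⟨hne x h, h⟩⟩
      rw [hset, card_filter_lt _ r (by omega)]
    · have hset : ({e} : Finset (Fin (r + (m+1))))ᶜ.filter (fun x : Fin (r + (m+1)) => r ≤ (x:ℕ))
          = (Finset.univ.filter (fun x : Fin (r + (m+1)) => r ≤ (x:ℕ))).erase e := by
        ext x
        simp only [Finset.mem_filter, Finset.mem_compl, Finset.mem_singleton, Finset.mem_erase,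
          Finset.mem_univ, true_and]
        try tauto
      have hmem : e ∈ Finset.univ.filter (fun x : Fin (r + (m+1)) => r ≤ (x:ℕ)) := by
        simp only [Finset.mem_filter, Finset.mem_univ, true_and, heval]
        omega
      rw [hset, Finset.card_erase_of_mem hmem, card_filter_ge _ r (by omega)]
      omega
  -- evaluation of the inner sums
  have hQeval : ∀ u : Fin (r + (m+1)), u ≠ e →
      (∑ τ ∈ Q u, -(Equiv.Perm.sign τ : ℤ))
        = -(Ssum r m) - (if (u:ℕ) < r then Ssum (r-1) m else Ssum r (m-1)) := by
    intro u hu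
    have hnofix : (Q u).filter (fun τ => ¬ τ u = u)
        = Finset.univ.filter (fun τ : Perm (Fin (r + (m+1))) =>
          (∀ x ∈ ({e} : Finset (Fin (r + (m+1)))), τ x = x) ∧
          (∀ x ∉ ({e} : Finset (Fin (r + (m+1)))), τ x ≠ x) ∧
          (∀ x y : Fin (r + (m+1)), (x : ℕ) < r → (y : ℕ) < r → x ≠ y → ¬ τ.SameCycle x y)) := by
      ext τ
      simp only [hQ, Finset.mem_filter, Finset.mem_univ, true_and, Finset.mem_singleton]
      constructor
      · rintro ⟨⟨h1, h2, h3⟩, h4⟩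
        refine ⟨fun x hx => by rw [hx]; exact h1, ?_, h3⟩
        intro x hx
        by_cases hxu : x = u
        · rw [hxu]; exact h4
        · exact h2 x hx hxu
      · rintro ⟨h1, h2, h3⟩
        exact ⟨⟨h1 e rfl, fun x hx _ => h2 x hx, h3⟩, h2 u hu⟩
    have hfixset : (Q u).filter (fun τ => τ u = u)
        = Finset.univ.filter (fun τ : Perm (Fin (r + (m+1))) =>
          (∀ x ∈ ({e, u} : Finset (Fin (r + (m+1)))), τ x = x) ∧
          (∀ x ∉ ({e, u} : Finset (Fin (r + (m+1)))), τ x ≠ x) ∧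
          (∀ x y : Fin (r + (m+1)), (x : ℕ) < r → (y : ℕ) < r → x ≠ y → ¬ τ.SameCycle x y)) := by
      ext τ
      simp only [hQ, Finset.mem_filter, Finset.mem_univ, true_and, Finset.mem_insert,
        Finset.mem_singleton, not_or]
      constructor
      · rintro ⟨⟨h1, h2, h3⟩, h4⟩
        refine ⟨?_, ?_, h3⟩
        · rintro x (hx | hx) <;> rw [hx]
          · exact h1
          · exact h4
        · rintro x ⟨hxe, hxu⟩
          exact h2 x hxe hxu
      · rintro ⟨h1, h2, h3⟩
        exact ⟨⟨h1 e (Or.inl rfl), fun x hxe hxu => h2 x ⟨hxe, hxu⟩, h3⟩, h1 u (Or.inr rfl)⟩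
    rw [Finset.sum_neg_distrib,
      ← Finset.sum_filter_add_sum_filter_not (Q u) (fun τ => τ u = u)
        (fun τ => (Equiv.Perm.sign τ : ℤ)),
      hnofix, hfixset, hbig0]
    by_cases hur : (u:ℕ) < r
    · have hc1 : (({e, u} : Finset (Fin (r + (m+1))))ᶜ.filter
          (fun x : Fin (r + (m+1)) => (x:ℕ) < r)).card = r - 1 := by
        have hset : ({e, u} : Finset (Fin (r + (m+1))))ᶜ.filter
            (fun x : Fin (r + (m+1)) => (x:ℕ) < r)
            = (Finset.univ.filter (fun x : Fin (r + (m+1)) => (x:ℕ) < r)).erase u := by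
          ext x
          simp only [Finset.mem_filter, Finset.mem_compl, Finset.mem_insert, Finset.mem_singleton,
            Finset.mem_erase, Finset.mem_univ, true_and, not_or]
          exact ⟨fun ⟨⟨_, h2⟩, h3⟩ => ⟨h2, h3⟩, fun ⟨h2, h3⟩ => ⟨⟨hne x h3, h2⟩, h3⟩⟩
        have hmem : u ∈ Finset.univ.filter (fun x : Fin (r + (m+1)) => (x:ℕ) < r) := by
          simp only [Finset.mem_filter, Finset.mem_univ, true_and]; exact hur
        rw [hset, Finset.card_erase_of_mem hmem, card_filter_lt _ r (by omega)]
      have hc2 : (({e, u} : Finset (Fin (r + (m+1))))ᶜ.filter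
          (fun x : Fin (r + (m+1)) => r ≤ (x:ℕ))).card = m := by
        have hset : ({e, u} : Finset (Fin (r + (m+1))))ᶜ.filter
            (fun x : Fin (r + (m+1)) => r ≤ (x:ℕ))
            = (Finset.univ.filter (fun x : Fin (r + (m+1)) => r ≤ (x:ℕ))).erase e := by
          ext x
          simp only [Finset.mem_filter, Finset.mem_compl, Finset.mem_insert, Finset.mem_singleton,
            Finset.mem_erase, Finset.mem_univ, true_and, not_or]
          refine ⟨fun ⟨⟨h1, _⟩, h3⟩ => ⟨h1, h3⟩, fun ⟨h1, h3⟩ => ⟨⟨h1, ?_⟩, h3⟩⟩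
          apply Fin.ne_of_val_ne
          omega
        have hmem : e ∈ Finset.univ.filter (fun x : Fin (r + (m+1)) => r ≤ (x:ℕ)) := by
          simp only [Finset.mem_filter, Finset.mem_univ, true_and, heval]; omega
        rw [hset, Finset.card_erase_of_mem hmem, card_filter_ge _ r (by omega)]
        omega
      rw [transfer r (r-1) m _ hc1 hc2, if_pos hur]
      ring
    · have hc1 : (({e, u} : Finset (Fin (r + (m+1))))ᶜ.filter
          (fun x : Fin (r + (m+1)) => (x:ℕ) < r)).card = r := by
        have hset : ({e, u} : Finset (Fin (r + (m+1))))ᶜ.filter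
            (fun x : Fin (r + (m+1)) => (x:ℕ) < r)
            = Finset.univ.filter (fun x : Fin (r + (m+1)) => (x:ℕ) < r) := by
          ext x
          simp only [Finset.mem_filter, Finset.mem_compl, Finset.mem_insert, Finset.mem_singleton,
            Finset.mem_univ, true_and, not_or]
          refine ⟨fun h => h.2, fun h => ⟨⟨hne x h, ?_⟩, h⟩⟩
          apply Fin.ne_of_val_ne
          omega
        rw [hset, card_filter_lt _ r (by omega)]
      have hc2 : (({e, u} : Finset (Fin (r + (m+1))))ᶜ.filter
          (fun x : Fin (r + (m+1)) => r ≤ (x:ℕ))).card = m - 1 := by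
        have hset : ({e, u} : Finset (Fin (r + (m+1))))ᶜ.filter
            (fun x : Fin (r + (m+1)) => r ≤ (x:ℕ))
            = ((Finset.univ.filter (fun x : Fin (r + (m+1)) => r ≤ (x:ℕ))).erase e).erase u := by
          ext x
          simp only [Finset.mem_filter, Finset.mem_compl, Finset.mem_insert, Finset.mem_singleton,
            Finset.mem_erase, Finset.mem_univ, true_and, not_or]
          exact ⟨fun ⟨⟨h1, h2⟩, h3⟩ => ⟨h2, h1, h3⟩, fun ⟨h2, h1, h3⟩ => ⟨⟨h1, h2⟩, h3⟩⟩
        have hmem1 : e ∈ Finset.univ.filter (fun x : Fin (r + (m+1)) => r ≤ (x:ℕ)) := by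
          simp only [Finset.mem_filter, Finset.mem_univ, true_and, heval]; omega
        have hmem2 : u ∈ (Finset.univ.filter
            (fun x : Fin (r + (m+1)) => r ≤ (x:ℕ))).erase e := by
          simp only [Finset.mem_erase, Finset.mem_filter, Finset.mem_univ, true_and]
          exact ⟨hu, by omega⟩
        rw [hset, Finset.card_erase_of_mem hmem2, Finset.card_erase_of_mem hmem1,
          card_filter_ge _ r (by omega)]
        omega
      rw [transfer r r (m-1) _ hc1 hc2, if_neg hur]
      ring
  -- assemble
  calc Ssum r (m+1)
      = ∑ u ∈ Finset.univ.filter (fun u : Fin (r + (m+1)) => u ≠ e),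
          (-(Ssum r m) - (if (u:ℕ) < r then Ssum (r-1) m else Ssum r (m-1))) := by
        rw [step1, step2]
        exact Finset.sum_congr rfl (fun u hu => hQeval u (Finset.mem_filter.mp hu).2)
    _ = -(((r : ℤ) + m) * Ssum r m + (m : ℤ) * Ssum r (m-1) + (r : ℤ) * Ssum (r-1) m) := by
        rw [← Finset.sum_filter_add_sum_filter_not
          (Finset.univ.filter (fun u : Fin (r + (m+1)) => u ≠ e))
          (fun u : Fin (r + (m+1)) => (u:ℕ) < r)]
        have hs1 : (Finset.univ.filter (fun u : Fin (r + (m+1)) => u ≠ e)).filter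
            (fun u : Fin (r + (m+1)) => (u:ℕ) < r)
            = Finset.univ.filter (fun x : Fin (r + (m+1)) => (x:ℕ) < r) := by
          ext x
          simp only [Finset.mem_filter, Finset.mem_univ, true_and]
          exact ⟨fun h => h.2, fun h => ⟨hne x h, h⟩⟩
        have hs2 : (Finset.univ.filter (fun u : Fin (r + (m+1)) => u ≠ e)).filter
            (fun u : Fin (r + (m+1)) => ¬ (u:ℕ) < r)
            = (Finset.univ.filter (fun x : Fin (r + (m+1)) => r ≤ (x:ℕ))).erase e := by
          ext x
          simp only [Finset.mem_filter, Finset.mem_univ, true_and, Finset.mem_erase, not_lt]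
          try tauto
        have hcard2 : ((Finset.univ.filter
            (fun x : Fin (r + (m+1)) => r ≤ (x:ℕ))).erase e).card = m := by
          have hmem : e ∈ Finset.univ.filter (fun x : Fin (r + (m+1)) => r ≤ (x:ℕ)) := by
            simp only [Finset.mem_filter, Finset.mem_univ, true_and, heval]; omega
          rw [Finset.card_erase_of_mem hmem, card_filter_ge _ r (by omega)]
          omega
        have hsum1 : ∑ u ∈ Finset.univ.filter (fun x : Fin (r + (m+1)) => (x:ℕ) < r),
              (-(Ssum r m) - (if (u:ℕ) < r then Ssum (r-1) m else Ssum r (m-1)))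
            = (r : ℤ) * (-(Ssum r m) - Ssum (r-1) m) := by
          have h1 : ∀ u ∈ Finset.univ.filter (fun x : Fin (r + (m+1)) => (x:ℕ) < r),
              (-(Ssum r m) - (if (u:ℕ) < r then Ssum (r-1) m else Ssum r (m-1)))
                = -(Ssum r m) - Ssum (r-1) m := fun u hu => by
            rw [if_pos (Finset.mem_filter.mp hu).2]
          rw [Finset.sum_congr rfl h1, Finset.sum_const, card_filter_lt _ r (by omega),
            nsmul_eq_mul]
        have hsum2 : ∑ u ∈ (Finset.univ.filter
              (fun x : Fin (r + (m+1)) => r ≤ (x:ℕ))).erase e,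
              (-(Ssum r m) - (if (u:ℕ) < r then Ssum (r-1) m else Ssum r (m-1)))
            = (m : ℤ) * (-(Ssum r m) - Ssum r (m-1)) := by
          have h1 : ∀ u ∈ (Finset.univ.filter
              (fun x : Fin (r + (m+1)) => r ≤ (x:ℕ))).erase e,
              (-(Ssum r m) - (if (u:ℕ) < r then Ssum (r-1) m else Ssum r (m-1)))
                = -(Ssum r m) - Ssum r (m-1) := fun u hu => by
            have h2 := (Finset.mem_erase.mp hu).2
            simp only [Finset.mem_filter, Finset.mem_univ, true_and] at h2
            rw [if_neg (by omega)]
          rw [Finset.sum_congr rfl h1, Finset.sum_const, hcard2, nsmul_eq_mul]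
        rw [hs1, hs2, hsum1, hsum2]
        ring

lemma Ssum_zero (r : ℕ) : Ssum r 0 = if r = 0 then 1 else 0 := by
  rcases Nat.eq_zero_or_pos r with h | h
  · subst h
    rw [Ssum, if_pos rfl]
    have hset : rDerSet 0 0 = {1} := by
      apply Finset.eq_singleton_iff_unique_mem.mpr
      constructor
      · refine Finset.mem_filter.mpr ⟨Finset.mem_univ _, fun x => x.elim0, ?_⟩
        intro x y hx _ _
        exact absurd hx (by omega)
      · intro σ _
        exact Equiv.ext fun x => x.elim0
    rw [hset]
    simp
  · rw [Ssum, if_neg (by omega)]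
    have hset : rDerSet r 0 = ∅ := by
      rw [Finset.eq_empty_iff_forall_notMem]
      intro σ hσ
      obtain ⟨-, hfix, hdisj⟩ := Finset.mem_filter.mp hσ
      set x0 : Fin (r + 0) := ⟨0, by omega⟩ with hx0
      have h1 : σ x0 ≠ x0 := hfix x0
      have h2 : ((σ x0 : Fin (r + 0)) : ℕ) < r := by
        have := (σ x0).isLt
        omega
      exact hdisj x0 (σ x0) (by simp [hx0]; omega) h2 (Ne.symm h1) ⟨1, by simp⟩
    rw [hset]
    simp

lemma Dri_link (r n : ℕ) :
    (Dri r 1 n : ℚ) - (Dri r 0 n : ℚ) = -((Ssum r n : ℤ) : ℚ) := by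
  have hc : (rDerSet r n).filter (fun σ => ¬ parity σ = 0)
      = (rDerSet r n).filter (fun σ => parity σ = 1) := by
    apply Finset.filter_congr
    intro σ _
    unfold parity
    by_cases h : Equiv.Perm.sign σ = 1 <;> simp [h]
  have h1 : Ssum r n = (((rDerSet r n).filter (fun σ => parity σ = 0)).card : ℤ)
      - (((rDerSet r n).filter (fun σ => parity σ = 1)).card : ℤ) := by
    rw [Ssum, ← Finset.sum_filter_add_sum_filter_not (rDerSet r n) (fun σ => parity σ = 0)
      (fun σ => (Equiv.Perm.sign σ : ℤ))]
    have ha : ∀ σ ∈ (rDerSet r n).filter (fun σ => parity σ = 0),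
        (Equiv.Perm.sign σ : ℤ) = 1 := by
      intro σ hσ
      have hp := (Finset.mem_filter.mp hσ).2
      unfold parity at hp
      by_cases h : Equiv.Perm.sign σ = 1
      · rw [h]; rfl
      · simp [h] at hp
    have hb : ∀ σ ∈ (rDerSet r n).filter (fun σ => ¬ parity σ = 0),
        (Equiv.Perm.sign σ : ℤ) = -1 := by
      intro σ hσ
      have hp := (Finset.mem_filter.mp hσ).2
      unfold parity at hp
      by_cases h : Equiv.Perm.sign σ = 1
      · simp [h] at hp
      · rcases Int.units_eq_one_or (Equiv.Perm.sign σ) with h3 | h3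
        · exact absurd h3 h
        · rw [h3]; rfl
    rw [Finset.sum_congr rfl ha, Finset.sum_congr rfl hb, hc, Finset.sum_const,
      Finset.sum_const]
    simp [nsmul_eq_mul]
    ring
  rw [Dri, Dri]
  rw [h1]
  push_cast
  ring

open PowerSeries

noncomputable def Aser (r : ℕ) : PowerSeries ℚ :=
  PowerSeries.mk fun n => ((Ssum r n : ℤ) : ℚ) / (Nat.factorial n : ℚ)

noncomputable def Eser : PowerSeries ℚ := rescale (-1 : ℚ) (exp ℚ)

noncomputable def Bser (r : ℕ) : PowerSeries ℚ := Aser r * (1 + X) ^ r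

noncomputable def Phi (r : ℕ) : PowerSeries ℚ := (-1) ^ r * X ^ r * Eser * (1 + X)

lemma coeff_Eser (n : ℕ) : (coeff n) Eser = (-1)^n / (Nat.factorial n : ℚ) := by
  rw [Eser, coeff_rescale, coeff_exp]
  simp
  rw [div_eq_mul_inv]

lemma Eser_deriv : d⁄dX ℚ Eser = -Eser := by
  apply PowerSeries.ext
  intro n
  rw [PowerSeries.coeff_derivative, map_neg, coeff_Eser, coeff_Eser, Nat.factorial_succ]
  have h2 : (Nat.factorial n : ℚ) ≠ 0 := by
    exact_mod_cast Nat.factorial_ne_zero n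
  push_cast
  field_simp
  ring

lemma A_ode (r : ℕ) :
    d⁄dX ℚ (Aser r) + X * d⁄dX ℚ (Aser r) + X * Aser r + C (r : ℚ) * Aser r
      + C (r : ℚ) * Aser (r-1) = 0 := by
  apply PowerSeries.ext
  intro n
  simp only [map_add, map_zero, PowerSeries.coeff_C_mul]
  cases n with
  | zero =>
    rw [PowerSeries.coeff_derivative, coeff_zero_X_mul, coeff_zero_X_mul]
    simp only [Aser, PowerSeries.coeff_mk]
    have hrecQ : ((Ssum r 1 : ℤ) : ℚ)
        = -((r : ℚ) * ((Ssum r 0 : ℤ) : ℚ) + (r : ℚ) * ((Ssum (r-1) 0 : ℤ) : ℚ)) := by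
      have h := Ssum_rec r 0
      rw [h]
      push_cast
      ring
    rw [hrecQ]
    simp [Nat.factorial]
    try ring
  | succ k =>
    rw [PowerSeries.coeff_derivative, coeff_succ_X_mul, coeff_succ_X_mul,
      PowerSeries.coeff_derivative]
    simp only [Aser, PowerSeries.coeff_mk]
    have hrecQ : ((Ssum r (k+1+1) : ℤ) : ℚ)
        = -(((r : ℚ) + (k+1)) * ((Ssum r (k+1) : ℤ) : ℚ)
          + ((k:ℚ)+1) * ((Ssum r k : ℤ) : ℚ)
          + (r : ℚ) * ((Ssum (r-1) (k+1) : ℤ) : ℚ)) := by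
      have h := Ssum_rec r (k+1)
      have h2 : k + 1 - 1 = k := rfl
      rw [h2] at h
      rw [h]
      push_cast
      ring
    rw [hrecQ, Nat.factorial_succ (k+1), Nat.factorial_succ k]
    have hk : ((Nat.factorial k : ℕ) : ℚ) ≠ 0 := by exact_mod_cast Nat.factorial_ne_zero k
    push_cast
    field_simp
    ring

lemma onePlusX_deriv : d⁄dX ℚ ((1 : PowerSeries ℚ) + X) = 1 := by
  rw [map_add, PowerSeries.derivative_X]
  simp

lemma onePlusX_pow_deriv (k : ℕ) :
    d⁄dX ℚ (((1 : PowerSeries ℚ) + X) ^ (k+1)) = ((k+1 : ℕ) : PowerSeries ℚ) * (1 + X) ^ k := by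
  rw [Derivation.leibniz_pow, onePlusX_deriv]
  simp [nsmul_eq_mul]

lemma X_pow_deriv (k : ℕ) :
    d⁄dX ℚ ((X : PowerSeries ℚ) ^ (k+1)) = ((k+1 : ℕ) : PowerSeries ℚ) * X ^ k := by
  rw [Derivation.leibniz_pow, PowerSeries.derivative_X]
  simp [nsmul_eq_mul]

lemma B_ode (r : ℕ) :
    (1 + X) * d⁄dX ℚ (Bser (r+1)) + X * Bser (r+1)
      + C ((r : ℚ) + 1) * ((1 + X) * Bser r) = 0 := by
  have hA := A_ode (r+1)
  have h2 : r + 1 - 1 = r := rfl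
  rw [h2] at hA
  have hL : d⁄dX ℚ (Bser (r+1)) = Aser (r+1) * (((r+1 : ℕ) : PowerSeries ℚ) * (1 + X) ^ r)
      + (1 + X) ^ (r+1) * d⁄dX ℚ (Aser (r+1)) := by
    rw [Bser, Derivation.leibniz, onePlusX_pow_deriv]
    simp [smul_eq_mul]
  rw [hL, Bser, Bser]
  have hc : (C ((r : ℚ) + 1) : PowerSeries ℚ) = ((r+1 : ℕ) : PowerSeries ℚ) := by
    have := map_natCast (C (R := ℚ)) (r+1)
    push_cast at this ⊢
    exact this
  rw [hc]
  rw [show C ((r+1 : ℕ) : ℚ) = ((r+1 : ℕ) : PowerSeries ℚ) from map_natCast _ _] at hA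
  linear_combination ((1 + X : PowerSeries ℚ)) ^ (r+1) * hA

lemma Phi_ode (r : ℕ) :
    (1 + X) * d⁄dX ℚ (Phi (r+1)) + X * Phi (r+1)
      + C ((r : ℚ) + 1) * ((1 + X) * Phi r) = 0 := by
  have hneg : d⁄dX ℚ ((-1 : PowerSeries ℚ)^(r+1)) = 0 := by
    rw [Derivation.leibniz_pow]
    simp
  have hD : d⁄dX ℚ (Phi (r+1)) = (-1)^(r+1) * (((r+1 : ℕ) : PowerSeries ℚ) * X^r * Eser * (1+X)
      - X^(r+1) * Eser * (1+X) + X^(r+1) * Eser) := by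
    rw [Phi]
    rw [Derivation.leibniz, Derivation.leibniz, Derivation.leibniz]
    rw [X_pow_deriv, hneg, Eser_deriv, onePlusX_deriv]
    simp only [smul_eq_mul]
    ring
  rw [hD, Phi, Phi]
  have hc : (C ((r : ℚ) + 1) : PowerSeries ℚ) = ((r+1 : ℕ) : PowerSeries ℚ) := by
    have := map_natCast (C (R := ℚ)) (r+1)
    push_cast at this ⊢
    exact this
  rw [hc]
  ring

lemma B_ode0 : (1 + X) * d⁄dX ℚ (Bser 0) + X * Bser 0 = 0 := by
  have hA := A_ode 0
  simp only [Nat.cast_zero, map_zero, zero_mul, add_zero] at hA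
  rw [Bser, pow_zero, mul_one]
  linear_combination hA

lemma Phi_ode0 : (1 + X) * d⁄dX ℚ (Phi 0) + X * Phi 0 = 0 := by
  have hD : d⁄dX ℚ (Phi 0) = -Eser * (1+X) + Eser := by
    rw [Phi]
    rw [Derivation.leibniz, Derivation.leibniz, Derivation.leibniz]
    rw [Eser_deriv, onePlusX_deriv]
    simp only [smul_eq_mul, pow_zero, Derivation.map_one_eq_zero]
    ring
  rw [hD, Phi]
  ring

lemma ode_unique (f : PowerSeries ℚ)
    (hf : d⁄dX ℚ f + X * d⁄dX ℚ f + X * f = 0)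
    (h0 : PowerSeries.coeff 0 f = 0) : f = 0 := by
  have key : ∀ n, PowerSeries.coeff n f = 0 := by
    intro n
    induction n using Nat.strong_induction_on with
    | _ n ih =>
      match n with
      | 0 => exact h0
      | Nat.succ k =>
        have hco := congrArg (PowerSeries.coeff k) hf
        rw [map_add, map_add, map_zero, PowerSeries.coeff_derivative] at hco
        match k with
        | 0 =>
          rw [coeff_zero_X_mul, coeff_zero_X_mul] at hco
          simpa using hco
        | Nat.succ j =>
          rw [coeff_succ_X_mul, coeff_succ_X_mul, PowerSeries.coeff_derivative] at hco
          rw [ih (j+1) (by omega), ih j (by omega)] at hco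
          have h1 : PowerSeries.coeff (j+1+1) f * ((j:ℚ)+1+1) = 0 := by
            push_cast at hco
            linarith
          have h2 : ((j:ℚ)+1+1) ≠ 0 := by positivity
          exact (mul_eq_zero.mp h1).resolve_right h2
  apply PowerSeries.ext
  intro n
  rw [key n, map_zero]

lemma coeff_zero_Bser (r : ℕ) :
    PowerSeries.coeff 0 (Bser r) = if r = 0 then 1 else 0 := by
  rw [Bser, PowerSeries.coeff_zero_eq_constantCoeff, map_mul, map_pow, map_add]
  simp only [map_one, PowerSeries.constantCoeff_X, add_zero, one_pow, mul_one]
  rw [← PowerSeries.coeff_zero_eq_constantCoeff]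
  simp only [Aser, PowerSeries.coeff_mk, Ssum_zero]
  split_ifs <;> simp

lemma coeff_zero_Phi (r : ℕ) :
    PowerSeries.coeff 0 (Phi r) = if r = 0 then 1 else 0 := by
  rw [Phi, PowerSeries.coeff_zero_eq_constantCoeff]
  simp only [map_mul, map_pow, map_add, map_one, map_neg,
    PowerSeries.constantCoeff_X, add_zero, mul_one]
  have hE : PowerSeries.constantCoeff Eser = 1 := by
    rw [← PowerSeries.coeff_zero_eq_constantCoeff, coeff_Eser]
    simp
  rw [hE]
  rcases Nat.eq_zero_or_pos r with h | h
  · subst h; simp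
  · rw [if_neg (by omega)]
    rw [zero_pow (by omega)]
    ring

lemma B_eq_Phi (r : ℕ) : Bser r = Phi r := by
  induction r with
  | zero =>
    have hode : d⁄dX ℚ (Bser 0 - Phi 0) + X * d⁄dX ℚ (Bser 0 - Phi 0)
        + X * (Bser 0 - Phi 0) = 0 := by
      rw [map_sub]
      linear_combination B_ode0 - Phi_ode0
    have h0 : PowerSeries.coeff 0 (Bser 0 - Phi 0) = 0 := by
      rw [map_sub, coeff_zero_Bser, coeff_zero_Phi]
      simp
    have := ode_unique _ hode h0
    exact sub_eq_zero.mp this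
  | succ r ih =>
    have hB := B_ode r
    rw [ih] at hB
    have hode : d⁄dX ℚ (Bser (r+1) - Phi (r+1)) + X * d⁄dX ℚ (Bser (r+1) - Phi (r+1))
        + X * (Bser (r+1) - Phi (r+1)) = 0 := by
      rw [map_sub]
      linear_combination hB - Phi_ode r
    have h0 : PowerSeries.coeff 0 (Bser (r+1) - Phi (r+1)) = 0 := by
      rw [map_sub, coeff_zero_Bser, coeff_zero_Phi]
      simp
    have := ode_unique _ hode h0
    exact sub_eq_zero.mp this

open PowerSeries in
/-- The exponential generating function of `C_r(n) = D_r^{(1)}(n) - D_r^{(0)}(n)` equals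
`(-1)^{r-1} x^r e^{-x} / (1+x)^{r-1}`, stated multiplicatively (both sides multiplied by
`(1+x)^r`, so that only non-negative exponents occur, also valid for `r = 0`). -/
theorem Cr_egf (r : ℕ) :
    (PowerSeries.mk fun n => ((Dri r 1 n : ℚ) - (Dri r 0 n : ℚ)) / (Nat.factorial n : ℚ)) *
        (1 + X) ^ r =
      (-1) ^ (r + 1) * X ^ r * rescale (-1 : ℚ) (exp ℚ) * (1 + X) := by
  have hmk : (PowerSeries.mk fun n => ((Dri r 1 n : ℚ) - (Dri r 0 n : ℚ)) / (Nat.factorial n : ℚ))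
      = -Aser r := by
    apply PowerSeries.ext
    intro n
    rw [PowerSeries.coeff_mk, map_neg]
    rw [Aser, PowerSeries.coeff_mk, Dri_link]
    ring
  rw [hmk]
  calc (-Aser r) * (1 + X) ^ r = -(Bser r) := by rw [Bser]; ring
    _ = -(Phi r) := by rw [B_eq_Phi r]
    _ = (-1) ^ (r + 1) * X ^ r * rescale (-1 : ℚ) (exp ℚ) * (1 + X) := by
        rw [Phi, Eser]
        ring
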